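/- arXiv:0905.1064 — 2 statements merged into one kernel-verified Lean document; each statement's English description precedes it below -/
import Mathlib

section
/- Fix a multigraph G and a positive integer k. Define the relation R^k on the vertices of G by: v₁ R^k v₂ if and only if v₁ = v₂ or there exist k pairwise edge-disjoint paths between v₁ and v₂ in G. Then R^k is an equivalence relation; in particular it is transitive: if there are k pairwise edge-disjoint paths between v₁ and v₂ and k pairwise edge-disjoint paths between v₂ and v₃, with v₁, v₂, v₃ distinct, then there are k pairwise edge-disjoint paths between v₁ and v₃. -/
/-- A multigraph on vertex type `V` with edge type `E`: each edge is assigned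
an unordered pair of endpoints (parallel edges and loops are allowed). -/
structure Multigraph (V : Type) (E : Type) where
  ends : E → Sym2 V

namespace Multigraph

variable {V E : Type}

/-- Walks in a multigraph, recorded as the sequence of traversed edges. -/
inductive Walk (G : Multigraph V E) : V → V → Type
  | nil (v : V) : Walk G v v
  | cons {u v w : V} (e : E) (he : G.ends e = s(u, v)) (p : Walk G v w) : Walk G u w

/-- The list of edges traversed by a walk. -/
def Walk.edges {G : Multigraph V E} : ∀ {u v : V}, G.Walk u v → List E
  | _, _, .nil _ => []
  | _, _, .cons e _ p => e :: p.edges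

/-- The list of vertices visited by a walk, in order. -/
def Walk.support {G : Multigraph V E} : ∀ {u v : V}, G.Walk u v → List V
  | _, _, .nil v => [v]
  | u, _, .cons _ _ p => u :: p.support

/-- A path is a walk visiting no vertex twice. -/
def Walk.IsPath {G : Multigraph V E} {u v : V} (p : G.Walk u v) : Prop :=
  p.support.Nodup

/-- There exist `k` pairwise edge-disjoint `u`–`v` paths in `G`. -/
def HasEdgeDisjointPaths (G : Multigraph V E) (k : ℕ) (u v : V) : Prop :=
  ∃ f : Fin k → G.Walk u v, (∀ i, (f i).IsPath) ∧
    ∀ i j, i ≠ j → ∀ e, e ∈ (f i).edges → e ∉ (f j).edges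

/-- `G` is `k`-edge-connected: it has more than one vertex and any two distinct
vertices are joined by at least `k` pairwise edge-disjoint paths. -/
def EdgeConnected (G : Multigraph V E) (k : ℕ) : Prop :=
  (∃ u v : V, u ≠ v) ∧ ∀ u v : V, u ≠ v → G.HasEdgeDisjointPaths k u v

/-- Deletion of the edge `e₀`. -/
def deleteEdge (G : Multigraph V E) (e₀ : E) : Multigraph V {e : E // e ≠ e₀} :=
  ⟨fun e => G.ends e.1⟩

/-- `G` is an edge-minimal `k`-edge-connected multigraph. -/
def EdgeMinimal (G : Multigraph V E) (k : ℕ) : Prop :=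
  G.EdgeConnected k ∧ ∀ e₀ : E, ¬ (G.deleteEdge e₀).EdgeConnected k

/-- The unordered pair of endpoints of an edge, as a multiset. -/
def _root_.Sym2.toMset {α : Type*} : Sym2 α → Multiset α :=
  Sym2.lift ⟨fun a b => {a, b}, fun a b => Multiset.cons_swap a b 0⟩

open Classical in
/-- The degree of a vertex: the number of edge-endpoints at `v`, counting
parallel edges with multiplicity (and loops twice). -/
noncomputable def degree (G : Multigraph V E) [Fintype E] (v : V) : ℕ :=
  ∑ e : E, Multiset.count v (G.ends e).toMset

/-- The relation `R^k`: `v₁ R^k v₂` iff `v₁ = v₂` or there are `k` pairwise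
edge-disjoint paths between `v₁` and `v₂`. -/
def Rel (G : Multigraph V E) (k : ℕ) (v₁ v₂ : V) : Prop :=
  v₁ = v₂ ∨ G.HasEdgeDisjointPaths k v₁ v₂

end Multigraph

/-!
If no set `F` of fewer than `k` edges separates `v₁` from `v₂` or `v₂` from `v₃`, then none
separates `v₁` from `v₃`: since the given paths are edge-disjoint and `|F| < k`, one path of each
family avoids `F`. So it suffices to prove the hard direction of Menger's theorem, restricted to
the finitely many edges of the given paths. This is done with integral unit-capacity flows:
augmenting along residual paths, a flow of value `k` is built, since otherwise the edges leaving
the residual-reachable set would form a cut of size equal to the current value `< k`. Such a flow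
then splits into `k` edge-disjoint paths, peeled off one at a time along edges carrying flow.
-/

namespace Multigraph

variable {V E : Type} {G : Multigraph V E}

namespace Walk

def append : ∀ {a b c : V}, G.Walk a b → G.Walk b c → G.Walk a c
  | _, _, _, .nil _, q => q
  | _, _, _, .cons e he p, q => .cons e he (p.append q)

@[simp] lemma edges_append : ∀ {a b c : V} (p : G.Walk a b) (q : G.Walk b c),
    (p.append q).edges = p.edges ++ q.edges
  | _, _, _, .nil _, _ => rfl
  | _, _, _, .cons e _ p, q => congrArg (e :: ·) (edges_append p q)

lemma support_eq_cons : ∀ {a b : V} (p : G.Walk a b), p.support = a :: p.support.tail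
  | _, _, .nil _ => rfl
  | _, _, .cons _ _ _ => rfl

lemma start_mem_support {a b : V} (p : G.Walk a b) : a ∈ p.support := by
  rw [support_eq_cons]
  exact List.mem_cons_self

lemma support_append : ∀ {a b c : V} (p : G.Walk a b) (q : G.Walk b c),
    (p.append q).support = p.support ++ q.support.tail
  | _, _, _, .nil _, q => support_eq_cons q
  | _, _, _, .cons _ _ p, q => congrArg (_ :: ·) (support_append p q)

def reverse : ∀ {a b : V}, G.Walk a b → G.Walk b a
  | _, _, .nil v => .nil v
  | _, _, .cons (u := x) e he p =>
      p.reverse.append (.cons e (by rw [he, Sym2.eq_swap]) (.nil x))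

@[simp] lemma edges_reverse : ∀ {a b : V} (p : G.Walk a b), p.reverse.edges = p.edges.reverse
  | _, _, .nil _ => rfl
  | _, _, .cons e _ p => by simp [reverse, edges, edges_reverse p]

@[simp] lemma support_reverse : ∀ {a b : V} (p : G.Walk a b),
    p.reverse.support = p.support.reverse
  | _, _, .nil _ => rfl
  | _, _, .cons _ _ p => by simp [reverse, support_append, support, support_reverse p]

lemma IsPath.reverse {a b : V} {p : G.Walk a b} (hp : p.IsPath) : p.reverse.IsPath := by
  rw [IsPath, support_reverse]
  exact List.nodup_reverse.2 hp

lemma mem_support_of_mem_edges {x y : V} {e : E} (he : G.ends e = s(x, y)) :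
    ∀ {a b : V} (p : G.Walk a b), e ∈ p.edges → x ∈ p.support
  | _, _, .nil _, h => by simp [edges] at h
  | _, _, .cons e' he' p, h => by
      rw [edges, List.mem_cons] at h
      rw [support]
      rcases h with rfl | h
      · rcases Sym2.eq_iff.1 (he.symm.trans he') with ⟨rfl, -⟩ | ⟨rfl, -⟩
        · exact List.mem_cons_self
        · exact List.mem_cons_of_mem _ p.start_mem_support
      · exact List.mem_cons_of_mem _ (mem_support_of_mem_edges he p h)

lemma exists_crossing_edge (R : Set V) :
    ∀ {a b : V} (p : G.Walk a b), a ∈ R → b ∉ R →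
      ∃ e ∈ p.edges, ∃ x y, G.ends e = s(x, y) ∧ x ∈ R ∧ y ∉ R
  | _, _, .nil _, ha, hb => absurd ha hb
  | _, _, .cons (v := y) e he p, ha, hb => by
      by_cases hy : y ∈ R
      · obtain ⟨e', he', h⟩ := exists_crossing_edge R p hy hb
        exact ⟨e', List.mem_cons_of_mem _ he', h⟩
      · exact ⟨e, List.mem_cons_self, _, _, he, ha, hy⟩

def All (P : E → V → V → Prop) : ∀ {a b : V}, G.Walk a b → Prop
  | _, _, .nil _ => True
  | _, _, .cons (u := x) (v := y) e _ p => P e x y ∧ p.All P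

lemma All.mono {P Q : E → V → V → Prop} (h : ∀ e x y, P e x y → Q e x y) :
    ∀ {a b : V} {p : G.Walk a b}, p.All P → p.All Q
  | _, _, .nil _, _ => trivial
  | _, _, .cons _ _ _, hp => ⟨h _ _ _ hp.1, All.mono h hp.2⟩

lemma All.exists_suffix {P : E → V → V → Prop} :
    ∀ {a b : V} {p : G.Walk a b}, p.All P → ∀ x ∈ p.support,
      ∃ q : G.Walk x b, q.All P ∧ q.support <:+ p.support
  | _, _, .nil _, hp, x, hx => by
      rw [support, List.mem_singleton] at hx
      subst hx
      exact ⟨_, hp, List.suffix_refl _⟩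
  | _, _, .cons _ _ p, hp, x, hx => by
      rcases List.mem_cons.1 hx with rfl | hx
      · exact ⟨_, hp, List.suffix_refl _⟩
      · obtain ⟨q, hq, hsuf⟩ := hp.2.exists_suffix x hx
        exact ⟨q, hq, hsuf.trans (List.suffix_cons _ _)⟩

end Walk

def AdjVia (G : Multigraph V E) (P : E → V → V → Prop) (a b : V) : Prop :=
  ∃ e, G.ends e = s(a, b) ∧ P e a b

lemma exists_isPath_of_reflTransGen {P : E → V → V → Prop} {a b : V}
    (h : Relation.ReflTransGen (G.AdjVia P) a b) : ∃ p : G.Walk a b, p.IsPath ∧ p.All P := by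
  induction h using Relation.ReflTransGen.head_induction_on with
  | refl => exact ⟨.nil b, List.nodup_singleton b, trivial⟩
  | @head a a' hstep _ ih =>
    obtain ⟨e, he, hP⟩ := hstep
    obtain ⟨p, hp, hpP⟩ := ih
    by_cases ha : a ∈ p.support
    · obtain ⟨q, hq, hsuf⟩ := hpP.exists_suffix a ha
      exact ⟨q, hsuf.sublist.nodup hp, hq⟩
    · exact ⟨.cons e he p, List.nodup_cons.2 ⟨ha, hp⟩, hP, hpP⟩

open scoped Classical

section Orientation

variable (G) in
/-- Flows are signed relative to this arbitrary orientation of the edges. -/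
noncomputable def orient (e : E) : V × V := (G.ends e).out

lemma ends_eq_orient (e : E) : G.ends e = s((G.orient e).1, (G.orient e).2) :=
  (Quot.out_eq _).symm

variable (G) in
noncomputable def sign (e : E) (a b : V) : ℤ := if G.orient e = (a, b) then 1 else -1

variable (G) in
noncomputable def incidence (e : E) (v : V) : ℤ :=
  (if v = (G.orient e).1 then 1 else 0) - (if v = (G.orient e).2 then 1 else 0)

variable (G) in
noncomputable def crossing (R : Set V) (e : E) : ℤ :=
  (if (G.orient e).1 ∈ R then 1 else 0) - (if (G.orient e).2 ∈ R then 1 else 0)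

lemma orient_eq_or {e : E} {a b : V} (he : G.ends e = s(a, b)) :
    G.orient e = (a, b) ∨ G.orient e = (b, a) := by
  rcases Sym2.eq_iff.1 ((ends_eq_orient e).symm.trans he) with ⟨h₁, h₂⟩ | ⟨h₁, h₂⟩
  · exact Or.inl (Prod.ext h₁ h₂)
  · exact Or.inr (Prod.ext h₁ h₂)

lemma abs_sign_mul (e : E) (a b : V) (x : ℤ) : |G.sign e a b * x| = |x| := by
  unfold sign; split_ifs <;> simp

lemma sign_ne_zero (e : E) (a b : V) : G.sign e a b ≠ 0 := by
  unfold sign; split_ifs <;> decide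

lemma sign_mul_sign (e : E) (a b : V) : G.sign e a b * G.sign e a b = 1 := by
  unfold sign; split_ifs <;> rfl

lemma sign_mul_incidence {e : E} {a b : V} (he : G.ends e = s(a, b)) (v : V) :
    G.sign e a b * G.incidence e v = (if v = a then 1 else 0) - (if v = b then 1 else 0) := by
  rcases orient_eq_or he with h | h
  · simp [sign, incidence, h]
  · by_cases hab : a = b
    · subst hab; simp [sign, incidence, h]
    · have : (b, a) ≠ (a, b) := fun h' => hab (Prod.ext_iff.1 h').2
      simp only [sign, incidence, h, if_neg this]
      ring

lemma crossing_eq_sign {R : Set V} {e : E} {a b : V} (he : G.ends e = s(a, b))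
    (ha : a ∈ R) (hb : b ∉ R) : G.crossing R e = G.sign e a b := by
  have hab : (b, a) ≠ (a, b) := fun h => hb (by rwa [(Prod.mk.inj h).1])
  rcases orient_eq_or he with h | h
  · simp [crossing, sign, h, ha, hb]
  · simp [crossing, sign, h, ha, hb, hab]

lemma crossing_eq_zero_or (R : Set V) (e : E) : G.crossing R e = 0 ∨
    ∃ a b, G.ends e = s(a, b) ∧ a ∈ R ∧ b ∉ R ∧ G.crossing R e = G.sign e a b := by
  have he := ends_eq_orient (G := G) e
  by_cases h₁ : (G.orient e).1 ∈ R <;> by_cases h₂ : (G.orient e).2 ∈ R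
  · left; simp [crossing, h₁, h₂]
  · exact Or.inr ⟨_, _, he, h₁, h₂, crossing_eq_sign he h₁ h₂⟩
  · rw [Sym2.eq_swap] at he
    exact Or.inr ⟨_, _, he, h₂, h₁, crossing_eq_sign he h₂ h₁⟩
  · left; simp [crossing, h₁, h₂]

end Orientation

section Flow

variable (S : Finset E) {s t : V}

variable (G) in
noncomputable def netOutflow (f : E → ℤ) (v : V) : ℤ := ∑ e ∈ S, f e * G.incidence e v

variable (G) in
structure IsFlow (s t : V) (f : E → ℤ) : Prop where
  abs_le_one : ∀ e, |f e| ≤ 1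
  eq_zero_of_notMem : ∀ e ∉ S, f e = 0
  conserve : ∀ v, v ≠ s → v ≠ t → G.netOutflow S f v = 0

lemma isFlow_zero : G.IsFlow S s t 0 :=
  ⟨fun _ => by simp, fun _ _ => rfl, fun _ _ _ => by simp [netOutflow]⟩

lemma netOutflow_zero (v : V) : G.netOutflow S 0 v = 0 := by simp [netOutflow]

lemma netOutflow_add (f g : E → ℤ) (v : V) :
    G.netOutflow S (f + g) v = G.netOutflow S f v + G.netOutflow S g v := by
  simp [netOutflow, add_mul, Finset.sum_add_distrib]

lemma netOutflow_sub (f g : E → ℤ) (v : V) :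
    G.netOutflow S (f - g) v = G.netOutflow S f v - G.netOutflow S g v := by
  simp [netOutflow, sub_mul, Finset.sum_sub_distrib]

noncomputable def Walk.unitFlow : ∀ {a b : V}, G.Walk a b → E → ℤ
  | _, _, .nil _ => 0
  | _, _, .cons (u := x) (v := y) e _ p =>
      fun e' => (if e' = e then G.sign e x y else 0) + p.unitFlow e'

lemma Walk.unitFlow_eq_zero {e : E} :
    ∀ {a b : V} {p : G.Walk a b}, e ∉ p.edges → p.unitFlow e = 0
  | _, _, .nil _, _ => rfl
  | _, _, .cons e' _ p, he => by
      rw [edges, List.mem_cons, not_or] at he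
      simp [unitFlow, he.1, unitFlow_eq_zero he.2]

lemma Walk.IsPath.unitFlow_eq_sign {P : E → V → V → Prop} {e : E} :
    ∀ {a b : V} {p : G.Walk a b}, p.IsPath → p.All P → e ∈ p.edges →
      ∃ x y, P e x y ∧ p.unitFlow e = G.sign e x y
  | _, _, .nil _, _, _, he => by simp [edges] at he
  | _, _, .cons e' he' p, hp, hP, he => by
      obtain ⟨hx, hp⟩ := List.nodup_cons.1 hp
      rcases List.mem_cons.1 he with rfl | he
      · have : e ∉ p.edges := fun h => hx (mem_support_of_mem_edges he' p h)
        exact ⟨_, _, hP.1, by simp [unitFlow, unitFlow_eq_zero this]⟩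
      · have : e ≠ e' := fun h => hx (mem_support_of_mem_edges he' p (h ▸ he))
        simpa [unitFlow, this] using IsPath.unitFlow_eq_sign hp hP.2 he

lemma Walk.netOutflow_unitFlow :
    ∀ {a b : V} {p : G.Walk a b}, p.All (fun e _ _ => e ∈ S) → ∀ v,
      G.netOutflow S p.unitFlow v = (if v = a then 1 else 0) - (if v = b then 1 else 0)
  | _, _, .nil _, _, v => by simp [unitFlow, netOutflow]
  | _, _, .cons (u := x) (v := y) e he p, hp, v => by
      have hsingle : G.netOutflow S (fun e' => if e' = e then G.sign e x y else 0) v =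
          G.sign e x y * G.incidence e v := by
        simp [netOutflow, ite_mul, hp.1]
      have hsplit : (cons e he p).unitFlow =
          (fun e' => if e' = e then G.sign e x y else 0) + p.unitFlow := rfl
      rw [hsplit, netOutflow_add, hsingle, sign_mul_incidence he, netOutflow_unitFlow hp.2 v]
      ring

variable (G) in
/-- One more unit can be pushed from `a` to `b` along `e`. -/
def Residual (f : E → ℤ) (e : E) (a b : V) : Prop := e ∈ S ∧ G.sign e a b * f e ≤ 0

variable (G) in
/-- `e` carries one unit of flow from `a` to `b`. -/
def Forward (f : E → ℤ) (e : E) (a b : V) : Prop := G.sign e a b * f e = 1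

variable {S}

lemma IsFlow.abs_sign_mul_le_one {f : E → ℤ} (hf : G.IsFlow S s t f) (e : E) (a b : V) :
    |G.sign e a b * f e| ≤ 1 :=
  (abs_sign_mul e a b (f e)).trans_le (hf.abs_le_one e)

lemma IsFlow.add_unitFlow {f : E → ℤ} (hf : G.IsFlow S s t f) (hst : s ≠ t) {p : G.Walk s t}
    (hp : p.IsPath) (hres : p.All (G.Residual S f)) :
    G.IsFlow S s t (f + p.unitFlow) ∧
      G.netOutflow S (f + p.unitFlow) s = G.netOutflow S f s + 1 := by
  have hS : p.All fun e _ _ => e ∈ S := hres.mono fun _ _ _ h => h.1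
  refine ⟨⟨fun e => ?_, fun e he => ?_, fun v hvs hvt => ?_⟩, ?_⟩
  · by_cases hep : e ∈ p.edges
    · obtain ⟨x, y, ⟨-, hle⟩, hsign⟩ := hp.unitFlow_eq_sign hres hep
      have hcap := abs_le.1 (hf.abs_sign_mul_le_one e x y)
      rw [Pi.add_apply, hsign, ← abs_sign_mul e x y, mul_add, sign_mul_sign, abs_le]
      omega
    · simpa [Walk.unitFlow_eq_zero hep] using hf.abs_le_one e
  · have hep : e ∉ p.edges := fun hep => by
      obtain ⟨x, y, ⟨heS, -⟩, -⟩ := hp.unitFlow_eq_sign hres hep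
      exact he heS
    simp [Walk.unitFlow_eq_zero hep, hf.eq_zero_of_notMem e he]
  · rw [netOutflow_add, hf.conserve v hvs hvt, p.netOutflow_unitFlow S hS, if_neg hvs, if_neg hvt]
    ring
  · rw [netOutflow_add, p.netOutflow_unitFlow S hS, if_pos rfl, if_neg hst]
    ring

lemma Walk.IsPath.sub_unitFlow_eq_zero {f : E → ℤ} {a b : V} {p : G.Walk a b}
    (hp : p.IsPath) (hfwd : p.All (G.Forward f)) {e : E} (he : e ∈ p.edges) :
    f e - p.unitFlow e = 0 := by
  obtain ⟨x, y, hxy, hsign⟩ := hp.unitFlow_eq_sign hfwd he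
  have : G.sign e x y * (f e - p.unitFlow e) = 0 := by
    rw [hsign, mul_sub, show G.sign e x y * f e = 1 from hxy, sign_mul_sign, sub_self]
  exact abs_eq_zero.1 (by rw [← abs_sign_mul e x y, this, abs_zero])

lemma IsFlow.sub_unitFlow {f : E → ℤ} (hf : G.IsFlow S s t f) (hst : s ≠ t) {p : G.Walk s t}
    (hp : p.IsPath) (hfwd : p.All (G.Forward f)) :
    G.IsFlow S s t (f - p.unitFlow) ∧
      G.netOutflow S (f - p.unitFlow) s = G.netOutflow S f s - 1 := by
  have hS : p.All fun e _ _ => e ∈ S := hfwd.mono fun e x y h => by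
    by_contra he
    simp [Forward, hf.eq_zero_of_notMem e he] at h
  have hoff : ∀ e ∉ p.edges, (f - p.unitFlow) e = f e := fun e he => by
    simp [Walk.unitFlow_eq_zero he]
  refine ⟨⟨fun e => ?_, fun e he => ?_, fun v hvs hvt => ?_⟩, ?_⟩
  · by_cases hep : e ∈ p.edges
    · simp [hp.sub_unitFlow_eq_zero hfwd hep]
    · simpa [hoff e hep] using hf.abs_le_one e
  · by_cases hep : e ∈ p.edges
    · exact hp.sub_unitFlow_eq_zero hfwd hep
    · simpa [hoff e hep] using hf.eq_zero_of_notMem e he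
  · rw [netOutflow_sub, hf.conserve v hvs hvt, p.netOutflow_unitFlow S hS, if_neg hvs, if_neg hvt]
    ring
  · rw [netOutflow_sub, p.netOutflow_unitFlow S hS, if_pos rfl, if_neg hst]
    ring

lemma IsFlow.netOutflow_eq_sum_crossing {f : E → ℤ} (hf : G.IsFlow S s t f) {R : Set V}
    (hs : s ∈ R) (ht : t ∉ R) :
    G.netOutflow S f s = ∑ e ∈ S, f e * G.crossing R e := by
  set T : Finset V :=
    ((S.biUnion fun e => {(G.orient e).1, (G.orient e).2}) ∪ {s}).filter (· ∈ R) with hT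
  have hends : ∀ e ∈ S, ((G.orient e).1 ∈ T ↔ (G.orient e).1 ∈ R) ∧
      ((G.orient e).2 ∈ T ↔ (G.orient e).2 ∈ R) := fun e he => by
    simp only [hT, Finset.mem_filter, Finset.mem_union, Finset.mem_biUnion]
    exact ⟨⟨And.right, fun h => ⟨Or.inl ⟨e, he, by simp⟩, h⟩⟩,
      ⟨And.right, fun h => ⟨Or.inl ⟨e, he, by simp⟩, h⟩⟩⟩
  -- sum the conservation law over the vertices of `R` that matter
  calc G.netOutflow S f s = ∑ v ∈ T, G.netOutflow S f v := by
        refine (Finset.sum_eq_single_of_mem s (by simp [hT, hs]) fun v hv hvs => ?_).symm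
        exact hf.conserve v hvs fun hvt => ht (hvt ▸ (Finset.mem_filter.1 hv).2)
    _ = ∑ e ∈ S, f e * ∑ v ∈ T, G.incidence e v := by
        simp only [netOutflow, Finset.mul_sum]
        exact Finset.sum_comm
    _ = ∑ e ∈ S, f e * G.crossing R e := Finset.sum_congr rfl fun e he => by
        simp [incidence, crossing, Finset.sum_sub_distrib, (hends e he).1, (hends e he).2]

/-- The max-flow min-cut dichotomy. The cut consists of the edges leaving the set of vertices
reachable from `s` by residual steps. -/
lemma IsFlow.exists_augmenting_path_or_cut {f : E → ℤ} (hf : G.IsFlow S s t f) :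
    (∃ p : G.Walk s t, p.IsPath ∧ p.All (G.Residual S f)) ∨
      ∃ F : Finset E, (F.card : ℤ) = G.netOutflow S f s ∧
        ∀ w : G.Walk s t, (∀ e ∈ w.edges, e ∈ S) → ∃ e ∈ w.edges, e ∈ F := by
  set R : Set V := {x | Relation.ReflTransGen (G.AdjVia (G.Residual S f)) s x}
  have hs : s ∈ R := Relation.ReflTransGen.refl
  by_cases ht : t ∈ R
  · exact Or.inl (exists_isPath_of_reflTransGen ht)
  have hsat : ∀ e x y, G.ends e = s(x, y) → x ∈ R → y ∉ R → e ∈ S →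
      G.sign e x y * f e = 1 := fun e x y hxy hx hy heS => by
    have : ¬ G.sign e x y * f e ≤ 0 := fun h => hy (hx.tail ⟨e, hxy, heS, h⟩)
    have := abs_le.1 (hf.abs_sign_mul_le_one e x y)
    omega
  refine Or.inr ⟨S.filter (G.crossing R · ≠ 0), ?_, fun w hw => ?_⟩
  · rw [hf.netOutflow_eq_sum_crossing hs ht, Finset.card_filter]
    push_cast
    refine Finset.sum_congr rfl fun e he => ?_
    rcases crossing_eq_zero_or (G := G) R e with h | ⟨x, y, hxy, hx, hy, h⟩
    · simp [h]
    · rw [h, mul_comm, hsat e x y hxy hx hy he, if_pos (sign_ne_zero e x y)]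
  · obtain ⟨e, hew, x, y, hxy, hx, hy⟩ := w.exists_crossing_edge R hs ht
    refine ⟨e, hew, Finset.mem_filter.2 ⟨hw e hew, ?_⟩⟩
    rw [crossing_eq_sign hxy hx hy]
    exact sign_ne_zero e x y

lemma IsFlow.exists_forward_path {f : E → ℤ} (hf : G.IsFlow S s t f)
    (hpos : 0 < G.netOutflow S f s) : ∃ p : G.Walk s t, p.IsPath ∧ p.All (G.Forward f) := by
  set R : Set V := {x | Relation.ReflTransGen (G.AdjVia (G.Forward f)) s x}
  have hs : s ∈ R := Relation.ReflTransGen.refl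
  by_cases ht : t ∈ R
  · exact exists_isPath_of_reflTransGen ht
  have : G.netOutflow S f s ≤ 0 := by
    rw [hf.netOutflow_eq_sum_crossing hs ht]
    refine Finset.sum_nonpos fun e _ => ?_
    rcases crossing_eq_zero_or (G := G) R e with h | ⟨x, y, hxy, hx, hy, h⟩
    · simp [h]
    · have : G.sign e x y * f e ≠ 1 := fun h' => hy (hx.tail ⟨e, hxy, h'⟩)
      have := abs_le.1 (hf.abs_sign_mul_le_one e x y)
      rw [h, mul_comm]
      omega
  omega

lemma exists_isFlow_of_forall_card_lt (hst : s ≠ t) {k : ℕ}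
    (hcut : ∀ F : Finset E, F.card < k → ∃ w : G.Walk s t, ∀ e ∈ w.edges, e ∈ S ∧ e ∉ F) :
    ∀ j ≤ k, ∃ f, G.IsFlow S s t f ∧ G.netOutflow S f s = j
  | 0, _ => ⟨0, isFlow_zero S, netOutflow_zero S s⟩
  | j + 1, hj => by
    obtain ⟨f, hf, hval⟩ := exists_isFlow_of_forall_card_lt hst hcut j (by omega)
    rcases hf.exists_augmenting_path_or_cut with ⟨p, hp, hres⟩ | ⟨F, hF, hmeet⟩
    · obtain ⟨hf', hval'⟩ := hf.add_unitFlow hst hp hres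
      exact ⟨_, hf', by rw [hval', hval]; push_cast; ring⟩
    · obtain ⟨w, hw⟩ := hcut F (by omega)
      obtain ⟨e, hew, heF⟩ := hmeet w fun e he => (hw e he).1
      exact absurd heF (hw e hew).2

lemma exists_disjoint_paths_of_isFlow (hst : s ≠ t) :
    ∀ (j : ℕ) (f : E → ℤ), G.IsFlow S s t f → G.netOutflow S f s = j →
      ∃ P : Fin j → G.Walk s t, (∀ i, (P i).IsPath ∧ ∀ e ∈ (P i).edges, f e ≠ 0) ∧
        ∀ i i', i ≠ i' → ∀ e ∈ (P i).edges, e ∉ (P i').edges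
  | 0, _, _, _ => ⟨Fin.elim0, fun i => i.elim0, fun i => i.elim0⟩
  | j + 1, f, hf, hval => by
    obtain ⟨p, hp, hfwd⟩ := hf.exists_forward_path (by omega)
    obtain ⟨hf', hval'⟩ := hf.sub_unitFlow hst hp hfwd
    obtain ⟨P, hP, hdisj⟩ :=
      exists_disjoint_paths_of_isFlow hst j _ hf' (by rw [hval', hval]; push_cast; ring)
    have hnz : ∀ e ∈ p.edges, f e ≠ 0 := fun e he => by
      obtain ⟨x, y, hxy, -⟩ := hp.unitFlow_eq_sign hfwd he
      rintro h
      simp [Forward, h] at hxy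
    have hrest : ∀ e, (f - p.unitFlow) e ≠ 0 → e ∉ p.edges ∧ f e ≠ 0 := fun e he => by
      have hep : e ∉ p.edges := fun hep => he (hp.sub_unitFlow_eq_zero hfwd hep)
      simpa [Walk.unitFlow_eq_zero hep, hep] using he
    refine ⟨Fin.cons p P, fun i => ?_, fun i i' hii' e hi hi' => ?_⟩
    · cases i using Fin.cases with
      | zero => exact ⟨hp, hnz⟩
      | succ i => exact ⟨(hP i).1, fun e he => (hrest e ((hP i).2 e he)).2⟩
    · cases i using Fin.cases <;> cases i' using Fin.cases
      · exact hii' rfl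
      · exact (hrest e ((hP _).2 e hi')).1 hi
      · exact (hrest e ((hP _).2 e hi)).1 hi'
      · exact hdisj _ _ (fun h => hii' (congrArg Fin.succ h)) e hi hi'

variable (S) in
/-- Menger's theorem for edge-disjoint paths, inside a finite set of edges `S`. -/
theorem hasEdgeDisjointPaths_of_forall_card_lt (hst : s ≠ t) {k : ℕ}
    (hcut : ∀ F : Finset E, F.card < k → ∃ w : G.Walk s t, ∀ e ∈ w.edges, e ∈ S ∧ e ∉ F) :
    G.HasEdgeDisjointPaths k s t := by
  obtain ⟨f, hf, hval⟩ := exists_isFlow_of_forall_card_lt hst hcut k le_rfl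
  obtain ⟨P, hP, hdisj⟩ := exists_disjoint_paths_of_isFlow hst k f hf hval
  exact ⟨P, fun i => (hP i).1, hdisj⟩

end Flow

namespace HasEdgeDisjointPaths

variable {k : ℕ} {a b c : V}

lemma refl (G : Multigraph V E) (k : ℕ) (a : V) : G.HasEdgeDisjointPaths k a a :=
  ⟨fun _ => .nil a, fun _ => List.nodup_singleton a, fun _ _ _ _ h => by simp [Walk.edges] at h⟩

lemma symm (h : G.HasEdgeDisjointPaths k a b) : G.HasEdgeDisjointPaths k b a := by
  obtain ⟨P, hpath, hdisj⟩ := h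
  refine ⟨fun i => (P i).reverse, fun i => (hpath i).reverse, fun i j hij e hi hj => ?_⟩
  rw [Walk.edges_reverse, List.mem_reverse] at hi hj
  exact hdisj i j hij e hi hj

lemma exists_forall_notMem_of_card_lt {P : Fin k → G.Walk a b}
    (hdisj : ∀ i j, i ≠ j → ∀ e ∈ (P i).edges, e ∉ (P j).edges) {F : Finset E}
    (hF : F.card < k) : ∃ i, ∀ e ∈ (P i).edges, e ∉ F := by
  by_contra! hmeet
  choose g hgP hgF using hmeet
  obtain ⟨i, j, hij, hg⟩ := Fintype.exists_ne_map_eq_of_card_lt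
    (fun i => (⟨g i, hgF i⟩ : F)) (by simpa using hF)
  have hgij : g i = g j := congrArg Subtype.val hg
  exact hdisj i j hij (g i) (hgP i) (hgij ▸ hgP j)

lemma trans (h₁ : G.HasEdgeDisjointPaths k a b) (h₂ : G.HasEdgeDisjointPaths k b c) :
    G.HasEdgeDisjointPaths k a c := by
  rcases eq_or_ne a c with rfl | hac
  · exact refl G k a
  obtain ⟨P, -, hP⟩ := h₁
  obtain ⟨Q, -, hQ⟩ := h₂
  set S := Finset.univ.biUnion fun i => (P i).edges.toFinset ∪ (Q i).edges.toFinset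
  refine hasEdgeDisjointPaths_of_forall_card_lt S hac fun F hF => ?_
  obtain ⟨i, hi⟩ := exists_forall_notMem_of_card_lt hP hF
  obtain ⟨j, hj⟩ := exists_forall_notMem_of_card_lt hQ hF
  refine ⟨(P i).append (Q j), fun e he => ?_⟩
  rcases List.mem_append.1 ((P i).edges_append (Q j) ▸ he) with he | he
  · exact ⟨Finset.mem_biUnion.2 ⟨i, Finset.mem_univ _, by simp [he]⟩, hi e he⟩
  · exact ⟨Finset.mem_biUnion.2 ⟨j, Finset.mem_univ _, by simp [he]⟩, hj e he⟩

end HasEdgeDisjointPaths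

lemma rel_eq_hasEdgeDisjointPaths (G : Multigraph V E) (k : ℕ) :
    G.Rel k = G.HasEdgeDisjointPaths k := by
  ext a b
  exact ⟨fun h => h.elim (fun hab => hab ▸ .refl G k a) id, Or.inr⟩

end Multigraph

theorem rel_equivalence_general {V E : Type} (G : Multigraph V E) (k : ℕ) :
    Equivalence (G.Rel k) ∧
      ∀ v₁ v₂ v₃ : V, v₁ ≠ v₂ → v₂ ≠ v₃ → v₁ ≠ v₃ →
        G.HasEdgeDisjointPaths k v₁ v₂ → G.HasEdgeDisjointPaths k v₂ v₃ →
        G.HasEdgeDisjointPaths k v₁ v₃ := by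
  rw [Multigraph.rel_eq_hasEdgeDisjointPaths]
  exact ⟨⟨.refl G k, .symm, .trans⟩, fun _ _ _ _ _ _ => .trans⟩

/-- For a positive integer `k`, the relation `R^k` (equal, or
joined by `k` pairwise edge-disjoint paths) is an equivalence relation; in
particular it is transitive on triples of distinct vertices. -/
theorem rel_equivalence {V E : Type} (G : Multigraph V E) (k : ℕ) (hk : 0 < k) :
    Equivalence (G.Rel k) ∧
      ∀ v₁ v₂ v₃ : V, v₁ ≠ v₂ → v₂ ≠ v₃ → v₁ ≠ v₃ →
        G.HasEdgeDisjointPaths k v₁ v₂ → G.HasEdgeDisjointPaths k v₂ v₃ →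
        G.HasEdgeDisjointPaths k v₁ v₃ :=
  rel_equivalence_general G k
end

section
/- Let G be an edge-minimal, k-edge-connected multigraph, and let G^k be the quotient multigraph whose vertices are the equivalence classes of the relation R^{k+1} on the vertices of G, with one edge between classes v₁ and v₂ for every edge (u₁,u₂) of G with u₁ ∈ v₁ and u₂ ∈ v₂. Then G^k has more than one vertex, and G^k is exactly k-edge-connected: between any two distinct vertices of G^k the maximum number of pairwise edge-disjoint paths is exactly k. -/
namespace Multigraph

variable {V E : Type}

/-- A multigraph has more than one vertex and exactly `k` pairwise edge-disjoint
paths (as a maximum) between any two distinct vertices. -/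
def ExactlyEdgeConnected (G : Multigraph V E) (k : ℕ) : Prop :=
  (∃ u v : V, u ≠ v) ∧ ∀ u v : V, u ≠ v →
    G.HasEdgeDisjointPaths k u v ∧ ¬ G.HasEdgeDisjointPaths (k + 1) u v

/-- The quotient multigraph `G^k`: its vertices are the equivalence classes of
`R^(k+1)` and it has one edge between classes `v₁` and `v₂` for every edge
`(u₁, u₂)` of `G` with `u₁ ∈ v₁` and `u₂ ∈ v₂`.  (Since `R^(k+1)` is an
equivalence relation, taking its equivalence closure does not change it.) -/
def quotientGraph (G : Multigraph V E) (k : ℕ) :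
    Multigraph (Quotient (Relation.EqvGen.setoid (G.Rel (k + 1)))) E :=
  ⟨fun e => (G.ends e).map (Quotient.mk (Relation.EqvGen.setoid (G.Rel (k + 1))))⟩

end Multigraph

/-!
After deleting an edge of an edge-minimal `k`-edge-connected graph some pair of vertices has fewer
than `k` edge-disjoint paths, so in `G` it has at most `k`. By the edge form of Menger's theorem
(via unit-capacity flows and augmenting paths) such a pair is separated by a vertex set `S` with
at most `k` edges leaving it. Such an `S` never separates two `R^(k+1)`-related vertices, whose
`k + 1` edge-disjoint paths would each need their own edge of the cut; so `S` is a union of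
classes and is also a cut of `G^k`, with the same edges. Hence `G^k` has two vertices, and two
distinct classes `[a] ≠ [b]` are separated in `G^k` by at most `k` edges, since `a` and `b` are
unrelated, while the `k` edge-disjoint `a`–`b` paths of `G` map to walks of `G^k`.
-/

open Relation

theorem Relation.ReflTransGen.exists_nodup_isChain {α : Type*} {r : α → α → Prop} {a b : α}
    (h : ReflTransGen r a b) :
    ∃ l : List α, (a :: l).IsChain r ∧ (a :: l).getLast (List.cons_ne_nil a l) = b ∧
      (a :: l).Nodup := by
  induction h using ReflTransGen.head_induction_on with
  | refl => exact ⟨[], List.isChain_singleton b, rfl, List.nodup_singleton b⟩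
  | @head a c hac _ ih =>
    obtain ⟨l, hchain, hlast, hnodup⟩ := ih
    by_cases ha : a ∈ c :: l
    · obtain ⟨s, t, hst⟩ := List.append_of_mem ha
      rw [hst] at hchain hnodup
      refine ⟨t, hchain.right_of_append, ?_, hnodup.sublist (List.sublist_append_right s _)⟩
      subst hlast
      simp [hst]
    · exact ⟨c :: l, List.isChain_cons_cons.2 ⟨hac, hchain⟩, by rwa [List.getLast_cons_cons],
        List.nodup_cons.2 ⟨ha, hnodup⟩⟩

namespace Multigraph

variable {V W E : Type} {G : Multigraph V E}

theorem Walk.exists_suffix_of_mem_support {a v u : V} (q : G.Walk a v) (hu : u ∈ q.support) :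
    ∃ r : G.Walk u v, r.edges ⊆ q.edges ∧ r.support <:+ q.support := by
  induction q with
  | nil w =>
    obtain rfl : u = w := by simpa [Walk.support] using hu
    exact ⟨.nil u, List.Subset.refl _, List.suffix_refl _⟩
  | @cons a b w e he p ih =>
    by_cases h : u = a
    · subst h
      exact ⟨.cons e he p, List.Subset.refl _, List.suffix_refl _⟩
    · obtain ⟨r, hre, hrs⟩ := ih (by simpa [Walk.support, h] using hu)
      exact ⟨r, List.Subset.trans hre (List.subset_cons_self _ _),
        hrs.trans (List.suffix_cons _ _)⟩

theorem Walk.exists_isPath_edges_subset {u v : V} (p : G.Walk u v) :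
    ∃ q : G.Walk u v, q.IsPath ∧ q.edges ⊆ p.edges := by
  induction p with
  | nil w => exact ⟨.nil w, List.nodup_singleton w, List.Subset.refl _⟩
  | @cons u b w e he p ih =>
    obtain ⟨q, hq, hqp⟩ := ih
    by_cases hu : u ∈ q.support
    · obtain ⟨r, hrq, hrs⟩ := q.exists_suffix_of_mem_support hu
      exact ⟨r, hrs.sublist.nodup hq,
        List.Subset.trans (List.Subset.trans hrq hqp) (List.subset_cons_self _ _)⟩
    · exact ⟨.cons e he q, List.nodup_cons.2 ⟨hu, hq⟩, List.cons_subset_cons _ hqp⟩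

theorem hasEdgeDisjointPaths_iff_exists_walks {m : ℕ} {u v : V} :
    G.HasEdgeDisjointPaths m u v ↔
      ∃ p : Fin m → G.Walk u v, Pairwise fun i j => (p i).edges.Disjoint (p j).edges := by
  constructor
  · rintro ⟨p, -, hp⟩
    exact ⟨p, fun i j hij e hi hj => hp i j hij e hi hj⟩
  · rintro ⟨p, hp⟩
    choose q hq hqp using fun i => (p i).exists_isPath_edges_subset
    exact ⟨q, hq, fun i j hij e hi hj => hp hij (hqp i hi) (hqp j hj)⟩

theorem HasEdgeDisjointPaths.nonempty_of_ne {m : ℕ} {u v : V}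
    (h : G.HasEdgeDisjointPaths (m + 1) u v) (huv : u ≠ v) : Nonempty E := by
  obtain ⟨p, -, -⟩ := h
  cases p 0 with
  | nil => exact absurd rfl huv
  | cons e _ _ => exact ⟨e⟩

def Walk.toDeleteEdge {e₀ : E} :
    ∀ {a b : V} (p : G.Walk a b), e₀ ∉ p.edges → (G.deleteEdge e₀).Walk a b
  | _, _, .nil v, _ => .nil v
  | _, _, .cons e he p, h =>
    .cons ⟨e, fun h' => h (h' ▸ List.mem_cons_self)⟩ he
      (p.toDeleteEdge fun h' => h (List.mem_cons_of_mem _ h'))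

theorem Walk.map_val_edges_toDeleteEdge {e₀ : E} {a b : V} (p : G.Walk a b)
    (h : e₀ ∉ p.edges) :
    (p.toDeleteEdge h).edges.map Subtype.val = p.edges := by
  induction p with
  | nil => rfl
  | cons e he p ih => exact congrArg (e :: ·) (ih _)

theorem HasEdgeDisjointPaths.deleteEdge {m : ℕ} {u v : V} (e₀ : E)
    (h : G.HasEdgeDisjointPaths (m + 1) u v) : (G.deleteEdge e₀).HasEdgeDisjointPaths m u v := by
  obtain ⟨p, hp⟩ := hasEdgeDisjointPaths_iff_exists_walks.1 h
  obtain ⟨i₀, hi₀⟩ : ∃ i₀, ∀ i, i ≠ i₀ → e₀ ∉ (p i).edges := by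
    by_cases hex : ∃ i, e₀ ∈ (p i).edges
    · obtain ⟨i₀, h₀⟩ := hex
      exact ⟨i₀, fun i hi h => hp hi h h₀⟩
    · exact ⟨0, fun i _ => not_exists.1 hex i⟩
  let q j := (p (i₀.succAbove j)).toDeleteEdge (hi₀ _ (Fin.succAbove_ne i₀ j))
  have hq : ∀ j, ∀ e ∈ (q j).edges, e.1 ∈ (p (i₀.succAbove j)).edges := fun j e he => by
    rw [← Walk.map_val_edges_toDeleteEdge _ (hi₀ _ (Fin.succAbove_ne i₀ j))]
    exact List.mem_map_of_mem he
  exact hasEdgeDisjointPaths_iff_exists_walks.2 ⟨q, fun i j hij e hi hj =>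
    hp ((Fin.succAbove_right_injective (p := i₀)).ne hij) (hq i e hi) (hq j e hj)⟩

theorem EdgeMinimal.exists_not_hasEdgeDisjointPaths {k : ℕ} (hG : G.EdgeMinimal k) :
    ∃ u v, u ≠ v ∧ ¬ G.HasEdgeDisjointPaths (k + 1) u v := by
  by_contra! h
  obtain ⟨⟨⟨a, b, hab⟩, -⟩, hmin⟩ := hG
  obtain ⟨e₀⟩ := (h a b hab).nonempty_of_ne hab
  exact hmin e₀ ⟨⟨a, b, hab⟩, fun u v huv => (h u v huv).deleteEdge e₀⟩

def map (G : Multigraph V E) (φ : V → W) : Multigraph W E :=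
  ⟨fun e => (G.ends e).map φ⟩

def Walk.map (φ : V → W) : ∀ {a b : V}, G.Walk a b → (G.map φ).Walk (φ a) (φ b)
  | _, _, .nil v => .nil (φ v)
  | _, _, .cons e he p => .cons e (by simp [Multigraph.map, he]) (p.map φ)

theorem Walk.edges_map (φ : V → W) {a b : V} (p : G.Walk a b) : (p.map φ).edges = p.edges := by
  induction p with
  | nil => rfl
  | cons e he p ih => exact congrArg (e :: ·) ih

theorem HasEdgeDisjointPaths.map (φ : V → W) {m : ℕ} {a b : V}
    (h : G.HasEdgeDisjointPaths m a b) : (G.map φ).HasEdgeDisjointPaths m (φ a) (φ b) := by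
  obtain ⟨p, hp⟩ := hasEdgeDisjointPaths_iff_exists_walks.1 h
  exact hasEdgeDisjointPaths_iff_exists_walks.2
    ⟨fun i => (p i).map φ, by simpa only [Walk.edges_map] using hp⟩

/-- A fixed orientation `tail e → head e` of every edge; a flow `f : E →₀ ℤ` runs along it on
`e` when `f e > 0`. -/
noncomputable def tail (G : Multigraph V E) (e : E) : V := (G.ends e).out.1

noncomputable def head (G : Multigraph V E) (e : E) : V := (G.ends e).out.2

theorem ends_eq_tail_head (e : E) : G.ends e = s(G.tail e, G.head e) :=
  (Quot.out_eq _).symm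

theorem tail_head_eq_or {e : E} {x y : V} (he : G.ends e = s(x, y)) :
    (G.tail e = x ∧ G.head e = y) ∨ (G.tail e = y ∧ G.head e = x) :=
  Sym2.eq_iff.1 ((ends_eq_tail_head e).symm.trans he)

def cut (G : Multigraph V E) (S : Set V) : Set E :=
  {e | ∃ x ∈ S, ∃ y ∉ S, G.ends e = s(x, y)}

theorem mem_cut_iff_of_ends_eq {S : Set V} {e : E} {x y : V} (he : G.ends e = s(x, y)) :
    e ∈ G.cut S ↔ (x ∈ S ∧ y ∉ S) ∨ (y ∈ S ∧ x ∉ S) := by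
  change (∃ x' ∈ S, ∃ y' ∉ S, G.ends e = s(x', y')) ↔ _
  simp only [he, Sym2.eq_iff]
  constructor
  · rintro ⟨x', hx', y', hy', ⟨rfl, rfl⟩ | ⟨rfl, rfl⟩⟩
    exacts [Or.inl ⟨hx', hy'⟩, Or.inr ⟨hx', hy'⟩]
  · rintro (⟨hx, hy⟩ | ⟨hy, hx⟩)
    exacts [⟨x, hx, y, hy, Or.inl ⟨rfl, rfl⟩⟩, ⟨y, hy, x, hx, Or.inr ⟨rfl, rfl⟩⟩]

theorem cut_compl (S : Set V) : G.cut Sᶜ = G.cut S := by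
  ext e
  rw [mem_cut_iff_of_ends_eq (ends_eq_tail_head e), mem_cut_iff_of_ends_eq (ends_eq_tail_head e)]
  simp only [Set.mem_compl_iff, not_not]
  tauto

theorem map_cut (φ : V → W) (T : Set W) : (G.map φ).cut T = G.cut (φ ⁻¹' T) := by
  ext e
  have he : (G.map φ).ends e = s(φ (G.tail e), φ (G.head e)) := by
    show (G.ends e).map φ = _
    rw [ends_eq_tail_head e, Sym2.map_mk]
  rw [mem_cut_iff_of_ends_eq he, mem_cut_iff_of_ends_eq (ends_eq_tail_head e)]
  rfl

theorem Walk.exists_mem_edges_cut {S : Set V} {a b : V} (p : G.Walk a b) (ha : a ∈ S)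
    (hb : b ∉ S) : ∃ e ∈ p.edges, e ∈ G.cut S := by
  induction p with
  | nil => exact absurd ha hb
  | @cons a c w e he p ih =>
    by_cases hc : c ∈ S
    · obtain ⟨e', h, h'⟩ := ih hc hb
      exact ⟨e', List.mem_cons_of_mem _ h, h'⟩
    · exact ⟨e, List.mem_cons_self, a, ha, c, hc, he⟩

theorem HasEdgeDisjointPaths.le_encard_cut {m : ℕ} {u v : V} {S : Set V}
    (h : G.HasEdgeDisjointPaths m u v) (hu : u ∈ S) (hv : v ∉ S) :
    (m : ℕ∞) ≤ (G.cut S).encard := by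
  obtain ⟨p, -, hp⟩ := h
  choose c hcp hcS using fun i => (p i).exists_mem_edges_cut hu hv
  have hc : Function.Injective c := fun i j hij =>
    by_contra fun hne => hp i j hne _ (hcp i) (hij ▸ hcp j)
  calc (m : ℕ∞) ≤ (Set.range c).encard := by simpa using hc.encard_range
    _ ≤ (G.cut S).encard := Set.encard_le_encard (Set.range_subset_iff.2 hcS)

theorem HasEdgeDisjointPaths.mem_of_encard_cut_le {k : ℕ} {x y : V} {S : Set V}
    (h : G.HasEdgeDisjointPaths (k + 1) x y) (hS : (G.cut S).encard ≤ k) (hx : x ∈ S) :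
    y ∈ S := by
  by_contra hy
  have := (h.le_encard_cut hx hy).trans hS
  norm_cast at this
  omega

theorem mem_iff_mem_of_eqvGen_rel {k : ℕ} {S : Set V} (hS : (G.cut S).encard ≤ k) {x y : V}
    (h : EqvGen (G.Rel (k + 1)) x y) : x ∈ S ↔ y ∈ S := by
  induction h with
  | rel x y hxy =>
    rcases hxy with rfl | hxy
    · rfl
    · have hSc : (G.cut Sᶜ).encard ≤ k := by rwa [cut_compl]
      exact ⟨hxy.mem_of_encard_cut_le hS,
        fun hy => by_contra fun hx => hxy.mem_of_encard_cut_le hSc hx hy⟩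
  | refl => rfl
  | symm _ _ _ ih => exact ih.symm
  | trans _ _ _ _ _ ih₁ ih₂ => exact ih₁.trans ih₂

section Flow

open scoped Classical

noncomputable def sgn (G : Multigraph V E) (e : E) (x : V) : ℤ :=
  (if G.tail e = x then 1 else 0) - (if G.head e = x then 1 else 0)

noncomputable def outflow (G : Multigraph V E) : (E →₀ ℤ) →ₗ[ℤ] V → ℤ :=
  Finsupp.linearCombination ℤ G.sgn

/-- The value of `f e` that sends one unit along `e` away from `x`. -/
noncomputable def dir (G : Multigraph V E) (e : E) (x : V) : ℤ :=
  if G.tail e = x then 1 else -1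

def IsUnitFlow (G : Multigraph V E) (f : E →₀ ℤ) (m : ℕ) (u v : V) : Prop :=
  (∀ e, |f e| ≤ 1) ∧ G.outflow f = (m : ℤ) • (Pi.single u 1 - Pi.single v 1)

/-- One more unit of flow can be pushed from `x` to `y` along some edge. -/
def ResidualAdj (G : Multigraph V E) (f : E →₀ ℤ) (x y : V) : Prop :=
  ∃ e, G.ends e = s(x, y) ∧ |f e + G.dir e x| ≤ 1

theorem outflow_apply (f : E →₀ ℤ) (x : V) :
    G.outflow f x = ∑ e ∈ f.support, f e * G.sgn e x := by
  simp [outflow, Finsupp.linearCombination_apply, Finsupp.sum, Finset.sum_apply]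

theorem outflow_single_dir {e : E} {x y : V} (he : G.ends e = s(x, y)) (hxy : x ≠ y) :
    G.outflow (Finsupp.single e (G.dir e x)) = Pi.single x 1 - Pi.single y 1 := by
  funext z
  rw [outflow, Finsupp.linearCombination_single]
  simp only [Pi.smul_apply, smul_eq_mul, Pi.sub_apply, Pi.single_apply, sgn, dir]
  rcases tail_head_eq_or he with ⟨ht, hh⟩ | ⟨ht, hh⟩
  · simp [ht, hh, eq_comm (a := z)]
  · simp [ht, hh, hxy.symm, eq_comm (a := z)]

theorem exists_step_of_mul_sgn_pos {f : E →₀ ℤ} (hf : ∀ e, |f e| ≤ 1) {e : E} {x : V}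
    (h : 0 < f e * G.sgn e x) : ∃ y, x ≠ y ∧ G.ends e = s(x, y) ∧ f e = G.dir e x := by
  have hfe := abs_le.1 (hf e)
  by_cases ht : G.tail e = x <;> by_cases hh : G.head e = x <;> simp [sgn, ht, hh] at h
  · exact ⟨G.head e, Ne.symm hh, ht ▸ ends_eq_tail_head e, by simp [dir, ht]; omega⟩
  · exact ⟨G.tail e, Ne.symm ht, hh ▸ (ends_eq_tail_head e).trans Sym2.eq_swap,
      by simp [dir, ht]; omega⟩

theorem exists_step_of_outflow_pos {f : E →₀ ℤ} (hf : ∀ e, |f e| ≤ 1) {x : V}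
    (hx : 0 < G.outflow f x) :
    ∃ e ∈ f.support, ∃ y, x ≠ y ∧ G.ends e = s(x, y) ∧
      G.outflow (f.erase e) = G.outflow f - (Pi.single x 1 - Pi.single y 1) := by
  obtain ⟨e, he, hpos⟩ : ∃ e ∈ f.support, 0 < f e * G.sgn e x := by
    rw [outflow_apply] at hx
    exact Finset.exists_lt_of_sum_lt (f := fun _ => 0) (by simpa using hx)
  obtain ⟨y, hxy, hends, hfe⟩ := exists_step_of_mul_sgn_pos hf hpos
  refine ⟨e, he, y, hxy, hends, ?_⟩
  rw [← outflow_single_dir hends hxy, ← hfe, eq_sub_iff_add_eq, ← map_add,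
    Finsupp.erase_add_single]

theorem exists_walk_of_outflow_pos {f : E →₀ ℤ} (hf : ∀ e, |f e| ≤ 1) {x v : V}
    (hx : x = v ∨ 0 < G.outflow f x) (hv : ∀ z ≠ v, 0 ≤ G.outflow f z) :
    ∃ p : G.Walk x v, (∀ e ∈ p.edges, f e ≠ 0) ∧
      G.outflow (f.filter (· ∉ p.edges)) = G.outflow f - (Pi.single x 1 - Pi.single v 1) := by
  rcases hx with rfl | hx
  · refine ⟨.nil x, by simp [Walk.edges], ?_⟩
    rw [sub_self, sub_zero]
    congr 1
    ext e
    simp [Walk.edges]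
  obtain ⟨e, he, y, hxy, hends, hf₁⟩ := exists_step_of_outflow_pos hf hx
  have hy : y = v ∨ 0 < G.outflow (f.erase e) y := by
    refine or_iff_not_imp_left.2 fun hyv => ?_
    have := hv y hyv
    simp [hf₁, hxy.symm]
    omega
  have hv₁ : ∀ z ≠ v, 0 ≤ G.outflow (f.erase e) z := by
    intro z hz
    have := hv z hz
    rcases eq_or_ne z x with rfl | hzx
    · simp [hf₁, hxy]
      omega
    · simp [hf₁, Pi.single_apply, hzx]
      split_ifs <;> omega
  have hcap : ∀ e', |f.erase e e'| ≤ 1 := fun e' => by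
    rw [Finsupp.erase_apply]
    split_ifs <;> simp [hf e']
  obtain ⟨p, hp, hpf⟩ := exists_walk_of_outflow_pos hcap hy hv₁
  refine ⟨.cons e hends p, ?_, ?_⟩
  · simp only [Walk.edges, List.mem_cons, forall_eq_or_imp]
    exact ⟨Finsupp.mem_support_iff.1 he,
      fun e' he' h => hp e' he' (by simp [Finsupp.erase_apply, h])⟩
  · have hfilter : f.filter (· ∉ (Walk.cons e hends p).edges) =
        (f.erase e).filter (· ∉ p.edges) := by
      ext e'
      by_cases h : e' = e <;> simp [Finsupp.filter_apply, Walk.edges, h]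
    rw [hfilter, hpf, hf₁]
    abel
termination_by f.support.card
decreasing_by
  rw [Finsupp.support_erase]
  exact Finset.card_erase_lt_of_mem he

theorem IsUnitFlow.exists_walks {f : E →₀ ℤ} {m : ℕ} {u v : V} (hf : G.IsUnitFlow f m u v)
    (huv : u ≠ v) :
    ∃ p : Fin m → G.Walk u v, (Pairwise fun i j => (p i).edges.Disjoint (p j).edges) ∧
      ∀ i, ∀ e ∈ (p i).edges, f e ≠ 0 := by
  induction m generalizing f with
  | zero => exact ⟨Fin.elim0, fun i => i.elim0, fun i => i.elim0⟩
  | succ m ih =>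
    obtain ⟨hcap, hout⟩ := hf
    have hu : 0 < G.outflow f u := by simp [hout, huv]
    have hv : ∀ z ≠ v, 0 ≤ G.outflow f z := fun z hz => by
      simp [hout, Pi.single_apply, hz]
      split_ifs <;> omega
    obtain ⟨p₀, hp₀, hrest⟩ := exists_walk_of_outflow_pos hcap (Or.inr hu) hv
    have hg : G.IsUnitFlow (f.filter (· ∉ p₀.edges)) m u v := by
      refine ⟨fun e => ?_, ?_⟩
      · rw [Finsupp.filter_apply]
        split_ifs
        exacts [by simp, hcap e]
      · rw [hrest, hout]
        push_cast
        rw [add_smul, one_smul, add_sub_cancel_right]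
    obtain ⟨q, hq, hqf⟩ := ih hg
    have hq₀ : ∀ i, ∀ e ∈ (q i).edges, e ∉ p₀.edges ∧ f e ≠ 0 := fun i e he => by
      have := hqf i e he
      rw [Finsupp.filter_apply] at this
      exact ite_ne_right_iff.1 this
    refine ⟨Fin.cons p₀ q, pairwise_fin_succ_iff.2 ⟨?_, ?_, ?_⟩, fun i => ?_⟩
    · intro i e hi h₀
      exact (hq₀ i e (by simpa using hi)).1 (by simpa using h₀)
    · intro j e h₀ hj
      exact (hq₀ j e (by simpa using hj)).1 (by simpa using h₀)
    · simpa using hq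
    · induction i using Fin.cases with
      | zero => simpa using hp₀
      | succ i => simpa using fun e he => (hq₀ i e he).2

theorem IsUnitFlow.hasEdgeDisjointPaths {f : E →₀ ℤ} {m : ℕ} {u v : V}
    (hf : G.IsUnitFlow f m u v) (huv : u ≠ v) : G.HasEdgeDisjointPaths m u v :=
  let ⟨p, hp, _⟩ := hf.exists_walks huv
  hasEdgeDisjointPaths_iff_exists_walks.2 ⟨p, hp⟩

theorem exists_augment_along_chain {f : E →₀ ℤ} (hf : ∀ e, |f e| ≤ 1) (l : List V) (a : V)
    (hchain : (a :: l).IsChain (G.ResidualAdj f)) (hnodup : (a :: l).Nodup) :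
    ∃ g : E →₀ ℤ, (∀ e, |g e| ≤ 1) ∧
      G.outflow g = G.outflow f +
        (Pi.single a 1 - Pi.single ((a :: l).getLast (List.cons_ne_nil a l)) 1) ∧
      ∀ e, g e ≠ f e → ∀ w ∈ G.ends e, w ∈ a :: l := by
  induction l generalizing a with
  | nil => exact ⟨f, hf, by simp, fun e h => absurd rfl h⟩
  | cons b l ih =>
    obtain ⟨⟨e, hends, hres⟩, hchain⟩ := List.isChain_cons_cons.1 hchain
    obtain ⟨ha, hnodup⟩ := List.nodup_cons.1 hnodup
    obtain ⟨g, hg, hgout, hgf⟩ := ih b hchain hnodup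
    have hab : a ≠ b := fun h => ha (h ▸ List.mem_cons_self)
    have hge : g e = f e := by_contra fun h => ha (hgf e h a (hends ▸ Sym2.mem_mk_left a b))
    refine ⟨g + Finsupp.single e (G.dir e a), fun e' => ?_, ?_, fun e' he' w hw => ?_⟩
    · rcases eq_or_ne e' e with rfl | h
      · simpa [hge] using hres
      · simpa [Finsupp.single_eq_of_ne h] using hg e'
    · rw [map_add, hgout, outflow_single_dir hends hab, List.getLast_cons_cons]
      abel
    · rcases eq_or_ne e' e with rfl | h
      · rw [hends, Sym2.mem_iff] at hw
        rcases hw with rfl | rfl <;> simp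
      · have : g e' ≠ f e' := by simpa [Finsupp.single_eq_of_ne h] using he'
        exact List.mem_cons_of_mem _ (hgf e' this w hw)

theorem IsUnitFlow.exists_succ_of_reflTransGen {f : E →₀ ℤ} {m : ℕ} {u v : V}
    (hf : G.IsUnitFlow f m u v) (h : ReflTransGen (G.ResidualAdj f) u v) :
    ∃ g, G.IsUnitFlow g (m + 1) u v := by
  obtain ⟨l, hchain, hlast, hnodup⟩ := h.exists_nodup_isChain
  obtain ⟨g, hg, hout, -⟩ := exists_augment_along_chain hf.1 l u hchain hnodup
  refine ⟨g, hg, ?_⟩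
  rw [hout, hlast, hf.2]
  push_cast
  rw [add_smul, one_smul]

noncomputable def exitSign (G : Multigraph V E) (S : Set V) (e : E) : ℤ :=
  (if G.tail e ∈ S then 1 else 0) - (if G.head e ∈ S then 1 else 0)

theorem sum_outflow_eq_sum_mul_exitSign (F : Finset V) (f : E →₀ ℤ) :
    ∑ x ∈ F, G.outflow f x = ∑ e ∈ f.support, f e * G.exitSign F e := by
  simp only [outflow_apply]
  rw [Finset.sum_comm]
  refine Finset.sum_congr rfl fun e _ => ?_
  rw [← Finset.mul_sum]
  simp [sgn, exitSign, Finset.sum_sub_distrib, Finset.sum_ite_eq]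

theorem mul_exitSign_of_closed {f : E →₀ ℤ} (hf : ∀ e, |f e| ≤ 1) {S : Set V}
    (hS : ∀ x y, x ∈ S → G.ResidualAdj f x y → y ∈ S) (e : E) :
    f e * G.exitSign S e = if e ∈ G.cut S then 1 else 0 := by
  have hsat : ∀ x y, G.ends e = s(x, y) → x ∈ S → y ∉ S → f e = G.dir e x := by
    intro x y he hx hy
    have hres : ¬ |f e + G.dir e x| ≤ 1 := fun h => hy (hS x y hx ⟨e, he, h⟩)
    have := abs_le.1 (hf e)
    unfold dir at hres ⊢
    split_ifs at hres ⊢ <;> rw [abs_le] at hres <;> omega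
  have hends := ends_eq_tail_head (G := G) e
  rw [mem_cut_iff_of_ends_eq hends, exitSign]
  by_cases ht : G.tail e ∈ S <;> by_cases hh : G.head e ∈ S <;> simp only [ht, hh] <;> simp
  · rw [hsat _ _ hends ht hh, dir, if_pos rfl]
  · have hne : G.tail e ≠ G.head e := fun h => ht (h ▸ hh)
    rw [hsat _ _ (hends.trans Sym2.eq_swap) hh ht, dir, if_neg hne, neg_neg]

theorem IsUnitFlow.encard_cut_eq {f : E →₀ ℤ} {m : ℕ} {u v : V} (hf : G.IsUnitFlow f m u v)
    {S : Set V} (hu : u ∈ S) (hv : v ∉ S) (hS : ∀ x y, x ∈ S → G.ResidualAdj f x y → y ∈ S) :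
    (G.cut S).encard = m := by
  have hexit := mul_exitSign_of_closed hf.1 hS
  set C := f.support.filter (· ∈ G.cut S)
  have hC : G.cut S = C := by
    ext e
    simp only [C, Finset.coe_filter, Finsupp.mem_support_iff]
    refine ⟨fun h => ⟨fun h₀ => by simpa [h₀, h] using hexit e, h⟩, fun h => h.2⟩
  -- a finite stand-in for `S`, agreeing with it at `u` and at the endpoints of the support of `f`
  set A := insert u (f.support.image G.tail ∪ f.support.image G.head)
  set F := A.filter (· ∈ S)
  have hF : ∀ e ∈ f.support, G.exitSign F e = G.exitSign S e := by
    intro e he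
    have ht : G.tail e ∈ A := by simp [A, Finset.mem_image_of_mem _ he]
    have hh : G.head e ∈ A := by simp [A, Finset.mem_image_of_mem _ he]
    simp [exitSign, F, ht, hh]
  have hm : ∑ x ∈ F, G.outflow f x = m := by
    have huF : u ∈ F := Finset.mem_filter.2 ⟨Finset.mem_insert_self _ _, hu⟩
    have hvF : v ∉ F := fun h => hv (Finset.mem_filter.1 h).2
    simp only [hf.2, Pi.smul_apply, Pi.sub_apply, smul_eq_mul, ← Finset.mul_sum,
      Finset.sum_sub_distrib, Finset.sum_pi_single', huF, hvF, if_true, if_false]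
    simp
  have hcard : (C.card : ℤ) = m := by
    rw [← hm, sum_outflow_eq_sum_mul_exitSign,
      Finset.sum_congr rfl (fun e he => by rw [hF e he, hexit]),
      Finset.sum_boole]
  rw [hC, Set.encard_coe_eq_coe_finsetCard]
  exact_mod_cast hcard

theorem exists_cut_encard_le_of_not_hasEdgeDisjointPaths {k : ℕ} {u v : V} (huv : u ≠ v)
    (h : ¬ G.HasEdgeDisjointPaths (k + 1) u v) : ∃ S, u ∈ S ∧ v ∉ S ∧ (G.cut S).encard ≤ k := by
  by_contra! hcut
  suffices ∀ m ≤ k + 1, ∃ f, G.IsUnitFlow f m u v by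
    obtain ⟨f, hf⟩ := this (k + 1) le_rfl
    exact h (hf.hasEdgeDisjointPaths huv)
  intro m hm
  induction m with
  | zero => exact ⟨0, by simp, by simp⟩
  | succ m ih =>
    obtain ⟨f, hf⟩ := ih (by omega)
    by_cases hv : ReflTransGen (G.ResidualAdj f) u v
    · exact hf.exists_succ_of_reflTransGen hv
    · have hS := hf.encard_cut_eq (S := {z | ReflTransGen (G.ResidualAdj f) u z}) .refl hv
        fun x y hx hxy => hx.tail hxy
      have := hcut {z | ReflTransGen (G.ResidualAdj f) u z} .refl hv
      rw [hS] at this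
      norm_cast at this
      omega

end Flow

theorem quotientGraph_eq_map (G : Multigraph V E) (k : ℕ) :
    G.quotientGraph k = G.map (Quotient.mk _) :=
  rfl

theorem exists_quotientGraph_cut {k : ℕ} {a b : V} (hab : a ≠ b)
    (h : ¬ G.HasEdgeDisjointPaths (k + 1) a b) :
    ∃ T, Quotient.mk (EqvGen.setoid (G.Rel (k + 1))) a ∈ T ∧
      Quotient.mk (EqvGen.setoid (G.Rel (k + 1))) b ∉ T ∧
      ((G.quotientGraph k).cut T).encard ≤ k := by
  obtain ⟨S, ha, hb, hS⟩ := exists_cut_encard_le_of_not_hasEdgeDisjointPaths hab h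
  set T := Quotient.mk (EqvGen.setoid (G.Rel (k + 1))) '' S
  have hT : Quotient.mk _ ⁻¹' T = S := by
    ext x
    exact ⟨fun ⟨y, hy, hyx⟩ => (mem_iff_mem_of_eqvGen_rel hS (Quotient.exact hyx)).1 hy,
      fun hx => ⟨x, hx, rfl⟩⟩
  refine ⟨T, ⟨a, ha, rfl⟩, fun hb' => hb (hT ▸ hb'), ?_⟩
  rwa [quotientGraph_eq_map, map_cut, hT]

end Multigraph

open Multigraph

/-- If `G` is an edge-minimal, `k`-edge-connected multigraph,
then the quotient `G^k` by `R^(k+1)` has more than one vertex and is exactly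
`k`-edge-connected. -/
theorem quotientGraph_exactlyEdgeConnected {V E : Type} (G : Multigraph V E)
    (k : ℕ) (hG : G.EdgeMinimal k) :
    (G.quotientGraph k).ExactlyEdgeConnected k := by
  obtain ⟨u₀, v₀, huv₀, hnot₀⟩ := hG.exists_not_hasEdgeDisjointPaths
  obtain ⟨T₀, hu₀, hv₀, -⟩ := exists_quotientGraph_cut huv₀ hnot₀
  refine ⟨⟨_, _, ne_of_mem_of_not_mem hu₀ hv₀⟩, ?_⟩
  rintro ⟨a⟩ ⟨b⟩ hAB
  have hab : a ≠ b := by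
    rintro rfl
    exact hAB rfl
  have hnot : ¬ G.HasEdgeDisjointPaths (k + 1) a b := fun h =>
    hAB (Quot.sound (.rel _ _ (Or.inr h)))
  obtain ⟨T, ha, hb, hT⟩ := exists_quotientGraph_cut hab hnot
  refine ⟨quotientGraph_eq_map G k ▸ (hG.1.2 a b hab).map _, fun h => ?_⟩
  have := (h.le_encard_cut ha hb).trans hT
  norm_cast at this
  omega
end
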